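/- arXiv:1907.08172 — 5 statements merged into one kernel-verified Lean document; each statement's English description precedes it below -/
import Mathlib

section
/- For a monomial with exponent vector a : Fin s → ℕ and integers 1 ≤ c < s, the symbolic degree Sdeg_c(a) := Σ_{k≥1} max(0, c − s + #{i : a(i) ≥ k}) equals the minimum over all subsets J ⊆ Fin s of cardinality c of Σ_{i∈J} a(i). -/
/-!
A `c`-subset `J` minimising `∑ i ∈ J, a i` is downward closed for `a` (otherwise an exchange
lowers the sum), so at every level `k` it meets `{i | k < a i}` as little as two sets of sizes
`c` and `#{i | k < a i}` in an `s`-element set can. Summing these intersections over the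
levels recovers `∑ i ∈ J, a i`.
-/

/-- The symbolic degree of a monomial with exponent vector `a`, defined as the minimum over
all `c`-element subsets `J` of `Fin s` of the sum of `a` over `J`. -/
noncomputable def Sdeg (s c : ℕ) (a : Fin s → ℕ) : ℕ :=
  sInf {m : ℕ | ∃ J : Finset (Fin s), J.card = c ∧ m = ∑ i ∈ J, a i}

open Finset

theorem Finset.sum_eq_sum_range_card_filter_lt {ι : Type*} (J : Finset ι) (a : ι → ℕ) {N : ℕ}
    (h : ∀ i ∈ J, a i ≤ N) :
    ∑ i ∈ J, a i = ∑ k ∈ range N, #{i ∈ J | k < a i} := by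
  simp only [card_filter]
  rw [sum_comm]
  refine sum_congr rfl fun i hi => ?_
  have hlevels : {k ∈ range N | k < a i} = range (a i) := by
    ext k
    simp only [mem_filter, mem_range]
    have := h i hi
    omega
  rw [← card_filter, hlevels, card_range]

theorem Finset.le_of_mem_of_notMem_of_sum_minimal {ι M : Type*} [DecidableEq ι]
    [AddCommMonoid M] [LinearOrder M] [IsOrderedCancelAddMonoid M] {a : ι → M} {J : Finset ι}
    (hmin : ∀ J' : Finset ι, #J' = #J → ∑ i ∈ J, a i ≤ ∑ i ∈ J', a i)
    {i j : ι} (hi : i ∈ J) (hj : j ∉ J) : a i ≤ a j := by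
  have hj' : j ∉ J.erase i := fun h => hj (mem_of_mem_erase h)
  have hswap := hmin (insert j (J.erase i))
    (by rw [card_insert_of_notMem hj', card_erase_add_one hi])
  rw [sum_insert hj', ← add_sum_erase J a hi] at hswap
  exact le_of_add_le_add_right hswap

theorem Finset.card_filter_lt_of_forall_le {ι α : Type*} [Fintype ι] [DecidableEq ι]
    [Preorder α] [DecidableLT α]
    {a : ι → α} {J : Finset ι} (hJ : ∀ i ∈ J, ∀ j ∉ J, a i ≤ a j) (k : α) :
    #{i ∈ J | k < a i} = #J + #{i | k < a i} - Fintype.card ι := by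
  set L : Finset ι := {i | k < a i}
  have hfilter : {i ∈ J | k < a i} = J ∩ L := by ext; simp [L]
  have hunion := card_inter_add_card_union J L
  have huniv := card_le_univ (J ∪ L)
  rw [hfilter]
  rcases (J ∩ L).eq_empty_or_nonempty with hdisj | ⟨i, hi⟩
  · rw [hdisj, card_empty] at hunion ⊢
    omega
  · obtain ⟨hiJ, hiL⟩ := mem_inter.1 hi
    have hcover : J ∪ L = univ := eq_univ_of_forall fun j => by
      by_cases hj : j ∈ J
      · exact mem_union_left _ hj
      · exact mem_union_right _
          ((mem_filter_univ _).2 (((mem_filter_univ _).1 hiL).trans_le (hJ i hiJ j hj)))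
    rw [hcover, card_univ] at hunion
    omega

theorem stmt_3_general (s c : ℕ) (hcs : c < s) (a : Fin s → ℕ) :
    (∑ k ∈ Finset.range (Finset.univ.sup a),
        (c + (Finset.univ.filter (fun i => k < a i)).card - s)) = Sdeg s c a := by
  obtain ⟨J, hJ, hmin⟩ := exists_min_image (powersetCard c univ) (fun J => ∑ i ∈ J, a i)
    (powersetCard_nonempty.2 (by simpa using hcs.le))
  rw [mem_powersetCard_univ] at hJ
  have hSdeg : Sdeg s c a = ∑ i ∈ J, a i :=
    IsLeast.csInf_eq ⟨⟨J, hJ, rfl⟩, by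
      rintro _ ⟨J', hJ', rfl⟩
      exact hmin J' (mem_powersetCard_univ.2 hJ')⟩
  have hdown : ∀ i ∈ J, ∀ j ∉ J, a i ≤ a j := fun i hi j hj =>
    le_of_mem_of_notMem_of_sum_minimal
      (fun J' hJ' => hmin J' (mem_powersetCard_univ.2 (hJ' ▸ hJ))) hi hj
  rw [hSdeg, J.sum_eq_sum_range_card_filter_lt a fun i _ => le_sup (mem_univ i)]
  refine sum_congr rfl fun k _ => ?_
  rw [card_filter_lt_of_forall_le hdown, hJ, Fintype.card_fin]

theorem stmt_3 (s c : ℕ) (hc : 1 ≤ c) (hcs : c < s) (a : Fin s → ℕ) :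
    (∑ k ∈ Finset.range (Finset.univ.sup a),
        (c + (Finset.univ.filter (fun i => k < a i)).card - s)) = Sdeg s c a :=
  stmt_3_general s c hcs a
end

section
/- With Sdeg_c(a) := min over c-element subsets J of Fin s of Σ_{i∈J} a(i): if b is the indicator vector of a subset S ⊆ Fin s with supp(a) ⊆ S, then Sdeg_c(a + b) = Sdeg_c(a) + Sdeg_c(b) = Sdeg_c(a) + max(0, c − s + #S). -/
lemma Sdeg_le {s c : ℕ} (a : Fin s → ℕ) {J : Finset (Fin s)} (hJ : J.card = c) :
    Sdeg s c a ≤ ∑ i ∈ J, a i :=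
  Nat.sInf_le ⟨J, hJ, rfl⟩

lemma Sdeg_mem {s c : ℕ} (hcs : c ≤ s) (a : Fin s → ℕ) :
    ∃ J : Finset (Fin s), J.card = c ∧ Sdeg s c a = ∑ i ∈ J, a i := by
  have hne : {m : ℕ | ∃ J : Finset (Fin s), J.card = c ∧ m = ∑ i ∈ J, a i}.Nonempty := by
    obtain ⟨J, _, hJ⟩ := Finset.exists_subset_card_eq (s := (Finset.univ : Finset (Fin s))) (n := c)
      (by simpa using hcs)
    exact ⟨∑ i ∈ J, a i, J, hJ, rfl⟩
  exact Nat.sInf_mem hne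

theorem stmt_6 (s c : ℕ) (hc : 1 ≤ c) (hcs : c < s) (a : Fin s → ℕ)
    (S : Finset (Fin s)) (hsupp : ∀ i, 0 < a i → i ∈ S) :
    (let b : Fin s → ℕ := fun i => if i ∈ S then 1 else 0;
     Sdeg s c (a + b) = Sdeg s c a + Sdeg s c b ∧
     Sdeg s c (a + b) = Sdeg s c a + (c + S.card - s)) := by
  intro b
  have hcs' : c ≤ s := le_of_lt hcs
  have aze : ∀ i, i ∉ S → a i = 0 := by
    intro i hi
    by_contra h
    exact hi (hsupp i (Nat.pos_of_ne_zero h))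
  have hScard : S.card ≤ s := by simpa using Finset.card_le_card (Finset.subset_univ S)
  have hcompl : (Sᶜ : Finset (Fin s)).card = s - S.card := by
    simp [Finset.card_compl]
  have hbK : ∀ K : Finset (Fin s), ∑ i ∈ K, b i = (K ∩ S).card := by
    intro K
    have : ∑ i ∈ K, b i = ∑ i ∈ K ∩ S, 1 := by
      simp only [b]
      rw [Finset.sum_ite_mem]
    simpa using this
  by_cases hss : s ≤ c + S.card
  · -- main case
    set t := c + S.card - s with ht
    have htS : t ≤ S.card := by omega
    -- minimal sum over t-subsets of S
    set P : Set ℕ := {m : ℕ | ∃ T : Finset (Fin s), T ⊆ S ∧ T.card = t ∧ m = ∑ i ∈ T, a i}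
      with hP
    have hPne : P.Nonempty := by
      obtain ⟨T, hTS, hTc⟩ := Finset.exists_subset_card_eq (s := S) (n := t) htS
      exact ⟨∑ i ∈ T, a i, T, hTS, hTc, rfl⟩
    obtain ⟨T, hTS, hTc, hTm⟩ := Nat.sInf_mem hPne
    set M := sInf P with hM
    -- the witness set J
    set J : Finset (Fin s) := T ∪ Sᶜ with hJ
    have hdisj : Disjoint T (Sᶜ : Finset (Fin s)) := by
      rw [Finset.disjoint_left]
      intro i hi hic
      exact (Finset.mem_compl.mp hic) (hTS hi)
    have hJc : J.card = c := by
      rw [hJ, Finset.card_union_of_disjoint hdisj, hTc, hcompl]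
      omega
    have hsumaJ : ∑ i ∈ J, a i = M := by
      rw [hJ, Finset.sum_union hdisj, hTm.symm]
      have : ∑ i ∈ (Sᶜ : Finset (Fin s)), a i = 0 :=
        Finset.sum_eq_zero fun i hi => aze i (Finset.mem_compl.mp hi)
      omega
    have hJS : J ∩ S = T := by
      rw [hJ, Finset.union_inter_distrib_right]
      have h1 : T ∩ S = T := Finset.inter_eq_left.mpr hTS
      have h2 : (Sᶜ : Finset (Fin s)) ∩ S = ∅ := by
        rw [Finset.eq_empty_iff_forall_notMem]
        intro i hi
        simp at hi
      rw [h1, h2, Finset.union_empty]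
    have hsumbJ : ∑ i ∈ J, b i = t := by rw [hbK, hJS, hTc]
    -- lower bounds: for any K with card c
    have hinter : ∀ K : Finset (Fin s), K.card = c → t ≤ (K ∩ S).card := by
      intro K hK
      have h1 : (K ∩ S).card + (K \ S).card = K.card := Finset.card_inter_add_card_sdiff K S
      have h2 : (K \ S) ⊆ (Sᶜ : Finset (Fin s)) := by
        intro i hi
        simp only [Finset.mem_sdiff] at hi
        exact Finset.mem_compl.mpr hi.2
      have h3 := Finset.card_le_card h2
      omega
    have hlow_a : ∀ K : Finset (Fin s), K.card = c → M ≤ ∑ i ∈ K, a i := by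
      intro K hK
      obtain ⟨T', hT'sub, hT'c⟩ := Finset.exists_subset_card_eq (s := K ∩ S) (n := t) (hinter K hK)
      have h1 : M ≤ ∑ i ∈ T', a i :=
        Nat.sInf_le ⟨T', hT'sub.trans (Finset.inter_subset_right), hT'c, rfl⟩
      have h2 : ∑ i ∈ T', a i ≤ ∑ i ∈ K, a i :=
        Finset.sum_le_sum_of_subset (hT'sub.trans Finset.inter_subset_left)
      omega
    -- compute Sdeg a
    have hSa : Sdeg s c a = M := by
      obtain ⟨K, hKc, hKm⟩ := Sdeg_mem hcs' a
      have h1 := Sdeg_le a hJc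
      rw [hsumaJ] at h1
      have h2 := hlow_a K hKc
      omega
    -- compute Sdeg b
    have hSb : Sdeg s c b = t := by
      obtain ⟨K, hKc, hKm⟩ := Sdeg_mem hcs' b
      have h1 := Sdeg_le b hJc
      rw [hsumbJ] at h1
      have h2 : t ≤ ∑ i ∈ K, b i := by rw [hbK]; exact hinter K hKc
      omega
    -- compute Sdeg (a+b)
    have hSab : Sdeg s c (a + b) = M + t := by
      obtain ⟨K, hKc, hKm⟩ := Sdeg_mem hcs' (a + b)
      have h1 := Sdeg_le (a + b) hJc
      have hsplit : ∀ L : Finset (Fin s), ∑ i ∈ L, (a + b) i = ∑ i ∈ L, a i + ∑ i ∈ L, b i := by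
        intro L; rw [← Finset.sum_add_distrib]; rfl
      rw [hsplit, hsumaJ, hsumbJ] at h1
      have h2 : t ≤ ∑ i ∈ K, b i := by rw [hbK]; exact hinter K hKc
      have h3 := hlow_a K hKc
      rw [hsplit] at hKm
      omega
    exact ⟨by rw [hSab, hSa, hSb], by rw [hSab, hSa]⟩
  · -- case c + S.card < s : everything is 0
    push_neg at hss
    have hcc : c ≤ (Sᶜ : Finset (Fin s)).card := by omega
    obtain ⟨J, hJsub, hJc⟩ := Finset.exists_subset_card_eq (s := (Sᶜ : Finset (Fin s))) (n := c) hcc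
    have hsumaJ : ∑ i ∈ J, a i = 0 :=
      Finset.sum_eq_zero fun i hi => aze i (Finset.mem_compl.mp (hJsub hi))
    have hsumbJ : ∑ i ∈ J, b i = 0 := by
      refine Finset.sum_eq_zero fun i hi => ?_
      simp only [b, if_neg (Finset.mem_compl.mp (hJsub hi))]
    have h1 := Sdeg_le a hJc
    have h2 := Sdeg_le b hJc
    have h3 := Sdeg_le (a + b) hJc
    have hsplit : ∑ i ∈ J, (a + b) i = ∑ i ∈ J, a i + ∑ i ∈ J, b i := by
      rw [← Finset.sum_add_distrib]; rfl
    rw [hsumaJ] at h1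
    rw [hsumbJ] at h2
    rw [hsplit, hsumaJ, hsumbJ] at h3
    constructor <;> omega
end

section
/- The initial degree of symbolic powers that are multiples of c for monomial star configurations: for integers 1 ≤ c < s and r ≥ 1, the minimum of Σ_{i} a(i) over all a : Fin s → ℕ satisfying min_{J ⊆ Fin s, #J = c} Σ_{i∈J} a(i) ≥ rc equals r·s, attained at the constant vector a ≡ r. -/
open Finset

theorem Finset.sum_univ_sum_add_eq_card_nsmul {G M : Type*} [AddGroup G] [Fintype G]
    [AddCommMonoid M] (T : Finset G) (a : G → M) :
    ∑ g, ∑ t ∈ T, a (g + t) = #T • ∑ g, a g := by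
  rw [sum_comm, ← sum_const]
  exact sum_congr rfl fun t _ => Equiv.sum_comp (Equiv.addRight t) a

theorem le_sdeg_iff {s c m : ℕ} (hcs : c ≤ s) (a : Fin s → ℕ) :
    m ≤ Sdeg s c a ↔ ∀ J : Finset (Fin s), #J = c → m ≤ ∑ i ∈ J, a i := by
  obtain ⟨J, -, hJ⟩ := exists_subset_card_eq (s := (univ : Finset (Fin s))) (by simpa using hcs)
  refine (le_csInf_iff (OrderBot.bddBelow _) ?_).trans ⟨?_, ?_⟩
  · exact ⟨_, J, hJ, rfl⟩
  · exact fun h J hJ => h _ ⟨J, hJ, rfl⟩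
  · rintro h _ ⟨J, hJ, rfl⟩
    exact h J hJ

theorem mul_le_sum_of_mul_le_sdeg {s c r : ℕ} (hc : 0 < c) (hcs : c ≤ s) (a : Fin s → ℕ)
    (h : r * c ≤ Sdeg s c a) : r * s ≤ ∑ i, a i := by
  have : NeZero s := ⟨by omega⟩
  obtain ⟨T, -, hT⟩ := exists_subset_card_eq (s := (univ : Finset (Fin s))) (by simpa using hcs)
  have htranslate (g : Fin s) : r * c ≤ ∑ t ∈ T, a (g + t) :=
    ((le_sdeg_iff hcs a).1 h _ (by rw [card_map, hT])).trans_eq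
      (sum_map T (addLeftEmbedding g) a)
  have hcover : s * (r * c) ≤ c * ∑ i, a i := by
    calc s * (r * c) = ∑ _g : Fin s, r * c := by simp
      _ ≤ ∑ g, ∑ t ∈ T, a (g + t) := sum_le_sum fun g _ => htranslate g
      _ = c * ∑ i, a i := by rw [sum_univ_sum_add_eq_card_nsmul, hT, smul_eq_mul]
  exact Nat.le_of_mul_le_mul_left (by linarith) hc

theorem stmt_8_general (s c r : ℕ) (hc : 1 ≤ c) (hcs : c < s) :
    sInf {N : ℕ | ∃ a : Fin s → ℕ, r * c ≤ Sdeg s c a ∧ N = ∑ i, a i} = r * s ∧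
    r * c ≤ Sdeg s c (fun _ => r) ∧ (∑ _i : Fin s, r) = r * s := by
  have hconst : r * c ≤ Sdeg s c (fun _ => r) :=
    (le_sdeg_iff hcs.le _).2 fun J hJ => by simp [hJ, mul_comm]
  have hsum : (∑ _i : Fin s, r) = r * s := by simp [mul_comm]
  have hleast : IsLeast {N : ℕ | ∃ a : Fin s → ℕ, r * c ≤ Sdeg s c a ∧ N = ∑ i, a i} (r * s) := by
    refine ⟨⟨_, hconst, hsum.symm⟩, ?_⟩
    rintro N ⟨a, ha, rfl⟩
    exact mul_le_sum_of_mul_le_sdeg hc hcs.le a ha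
  exact ⟨hleast.csInf_eq, hconst, hsum⟩

theorem stmt_8 (s c r : ℕ) (hc : 1 ≤ c) (hcs : c < s) (hr : 1 ≤ r) :
    sInf {N : ℕ | ∃ a : Fin s → ℕ, r * c ≤ Sdeg s c a ∧ N = ∑ i, a i} = r * s ∧
    r * c ≤ Sdeg s c (fun _ => r) ∧ (∑ _i : Fin s, r) = r * s :=
  stmt_8_general s c r hc hcs
end

section
/- For a partition [d₁,…,d_t] of m with all parts at most c, define its index of overlap i₀ as the largest j such that there exists a partition [b] of m with parts ≤ c satisfying [b] >_alex [d] and b_h = d_h for all h < j. If such j exists (i.e. [d] is not the alex-maximum of P_{≤c}(m)), then i₀ = max{ j ∈ {1,…,t−1} : d_j < d_{j−1} } (with d₀ := +∞); in particular i₀ < t and d_{i₀} < d_{i₀−1}, and d_j = d_{i₀} for all i₀ ≤ j ≤ t−1 whenever d_t < d_{i₀}. -/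
set_option linter.unnecessarySeqFocus false

def IsPartOf (m c : ℕ) (d : List ℕ) : Prop :=
  d.Pairwise (· ≥ ·) ∧ (∀ x ∈ d, 1 ≤ x ∧ x ≤ c) ∧ d.sum = m

def alexGT (b d : List ℕ) : Prop :=
  b.length < d.length ∨ (b.length = d.length ∧ List.Lex (· < ·) d b)

lemma lex_rec {d b : List ℕ} (h : List.Lex (· < ·) d b) :
    (∃ k, k < d.length ∧ k < b.length ∧ (∀ i, i < k → d.getD i 0 = b.getD i 0) ∧
      d.getD k 0 < b.getD k 0) ∨
    (d.length < b.length ∧ ∀ i, i < d.length → d.getD i 0 = b.getD i 0) := by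
  induction h with
  | nil => right; simp
  | rel hab => left; exact ⟨0, by simp, by simp, by omega, by simpa using hab⟩
  | cons h ih =>
    rcases ih with ⟨k, h1, h2, h3, h4⟩ | ⟨h1, h2⟩
    · left
      refine ⟨k+1, by simpa using h1, by simpa using h2, ?_, by simpa using h4⟩
      intro i hi
      cases i with
      | zero => simp
      | succ n => simpa using h3 n (by omega)
    · right
      refine ⟨by simpa using h1, ?_⟩
      intro i hi
      cases i with
      | zero => simp
      | succ n => simp only [List.getD_cons_succ]; exact h2 n (by simpa using hi)

lemma lex_append {r : ℕ → ℕ → Prop} {l₁ l₂ : List ℕ} (p : List ℕ) (h : List.Lex r l₁ l₂) :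
    List.Lex r (p ++ l₁) (p ++ l₂) := by
  induction p with
  | nil => simpa
  | cons a q ih => exact List.Lex.cons ih

lemma sorted_getD_mono {l : List ℕ} (hs : l.Pairwise (· ≥ ·)) {i j : ℕ}
    (hij : i ≤ j) (hj : j < l.length) : l.getD j 0 ≤ l.getD i 0 := by
  rcases eq_or_lt_of_le hij with rfl | hlt
  · exact le_refl _
  · rw [List.getD_eq_getElem _ _ hj, List.getD_eq_getElem _ _ (lt_of_le_of_lt hij hj)]
    exact List.Pairwise.rel_get_of_lt hs (by simpa using hlt)

lemma core {m c : ℕ} {d b : List ℕ} (hd : IsPartOf m c d) (hb : IsPartOf m c b)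
    {N : ℕ} (hNt : N < d.length) (a : ℕ)
    (hagree : ∀ i, i < N → b.getD i 0 = d.getD i 0)
    (hconst : ∀ k, N ≤ k → k < d.length - 1 → d.getD k 0 = a)
    (hbnd : ∀ x ∈ b.drop N, x ≤ a) : ¬ alexGT b d := by
  obtain ⟨hds, hdx, hdsum⟩ := hd
  obtain ⟨hbs, hbx, hbsum⟩ := hb
  have hNb : N ≤ b.length := by
    by_contra hcon
    push_neg at hcon
    have h1 := hagree b.length (by omega)
    rw [List.getD_eq_default _ _ (le_refl _)] at h1
    have hmem : d.getD b.length 0 ∈ d := by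
      rw [List.getD_eq_getElem _ _ (by omega)]
      exact List.getElem_mem _
    have := (hdx _ hmem).1
    omega
  have hlast : d.getD (d.length - 1) 0 ∈ d := by
    rw [List.getD_eq_getElem _ _ (by omega)]
    exact List.getElem_mem _
  have hlast1 : 1 ≤ d.getD (d.length - 1) 0 := (hdx _ hlast).1
  have hdec : d.drop N = List.replicate (d.length - 1 - N) a ++ [d.getD (d.length - 1) 0] := by
    apply List.ext_getElem
    · simp; omega
    · intro i h1 h2
      rw [List.getElem_drop]
      by_cases hi : i < d.length - 1 - N
      · rw [List.getElem_append_left (by simpa using hi)]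
        rw [List.getElem_replicate]
        rw [← List.getD_eq_getElem _ 0 (by omega)]
        exact hconst (N + i) (by omega) (by omega)
      · have hi' : i = d.length - 1 - N := by simp at h2; omega
        rw [List.getElem_append_right (by simpa using hi)]
        have hsing : ∀ (j : ℕ) (hj : j < 1), [d.getD (d.length - 1) 0][j]'hj = d.getD (d.length - 1) 0 := by
          intro j hj; interval_cases j <;> simp
        rw [hsing]
        rw [List.getD_eq_getElem _ 0 (by omega)]
        congr 1
        omega
  have hdropd : (d.drop N).sum = (d.length - 1 - N) * a + d.getD (d.length - 1) 0 := by
    rw [hdec]; simp [List.sum_replicate, mul_comm]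
  intro halex
  rcases halex with hlen | ⟨hlen, hlex⟩
  · -- b shorter
    have htake : b.take N = d.take N := by
      apply List.ext_getElem
      · simp; omega
      · intro i h1 h2
        simp only [List.getElem_take]
        rw [← List.getD_eq_getElem b 0 (by simp at h1; omega),
            ← List.getD_eq_getElem d 0 (by simp at h2; omega)]
        exact hagree i (by simp at h1; omega)
    have hsd := List.sum_take_add_sum_drop d N
    have hsb := List.sum_take_add_sum_drop b N
    have hble : (b.drop N).sum ≤ (b.length - N) * a := by
      have := List.sum_le_card_nsmul (b.drop N) a hbnd
      simpa [List.length_drop, smul_eq_mul, mul_comm] using this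
    have hmul : (b.length - N) * a ≤ (d.length - 1 - N) * a :=
      Nat.mul_le_mul_right a (by omega)
    rw [htake] at hsb
    omega
  · rcases lex_rec hlex with ⟨k, hk1, hk2, hk3, hk4⟩ | ⟨h1, _⟩
    · have hkN : N ≤ k := by
        by_contra hcon
        push_neg at hcon
        have := hagree k hcon
        omega
      by_cases hkt : k < d.length - 1
      · have hda : d.getD k 0 = a := hconst k hkN hkt
        have hmem : b.getD k 0 ∈ b.drop N := by
          rw [List.getD_eq_getElem _ _ hk2]
          have hkk : b[k] = (b.drop N)[k - N]'(by simp; omega) := by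
            rw [List.getElem_drop]
            congr 1
            omega
          rw [hkk]
          exact List.getElem_mem _
        have := hbnd _ hmem
        omega
      · have hkeq : k = d.length - 1 := by omega
        have htake : d.take k = b.take k := by
          apply List.ext_getElem
          · simp; omega
          · intro i h1 h2
            simp only [List.getElem_take]
            rw [← List.getD_eq_getElem d 0 (by simp at h1; omega),
                ← List.getD_eq_getElem b 0 (by simp at h2; omega)]
            exact hk3 i (by simp at h1; omega)
        have hdk : (d.drop k).sum = d.getD k 0 := by
          rw [List.getD_eq_getElem d 0 hk1]
          have hh : d.drop k = [d[k]'hk1] := by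
            apply List.ext_getElem
            · simp; omega
            · intro i hx1 hx2
              simp only [List.length_singleton] at hx2
              have : i = 0 := by omega
              subst this
              simp [List.getElem_drop]
          rw [hh]; simp
        have hbk : (b.drop k).sum = b.getD k 0 := by
          rw [List.getD_eq_getElem b 0 hk2]
          have hh : b.drop k = [b[k]'hk2] := by
            apply List.ext_getElem
            · simp; omega
            · intro i hx1 hx2
              simp only [List.length_singleton] at hx2
              have : i = 0 := by omega
              subst this
              simp [List.getElem_drop]
          rw [hh]; simp
        have hsd := List.sum_take_add_sum_drop d k
        have hsb := List.sum_take_add_sum_drop b k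
        have hts : (List.take k d).sum = (List.take k b).sum := by rw [htake]
        omega
    · omega

lemma construct {m c : ℕ} {d : List ℕ} (hd : IsPartOf m c d) {J : ℕ}
    (hJ1 : 1 ≤ J) (hJt : J ≤ d.length - 1) (ht2 : 2 ≤ d.length)
    (hcap : d.getD (J - 1) 0 < c)
    (hdesc : J = 1 ∨ d.getD (J - 1) 0 < d.getD (J - 2) 0) :
    ∃ b, IsPartOf m c b ∧ alexGT b d ∧
      ∀ h, 1 ≤ h → h < J → b.getD (h - 1) 0 = d.getD (h - 1) 0 := by
  obtain ⟨hds, hdx, hdsum⟩ := hd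
  set t := d.length with ht
  set a := d.getD (J - 1) 0 with ha
  have hJlt : J - 1 < t := by omega
  have hamem : a ∈ d := by rw [ha, List.getD_eq_getElem _ _ hJlt]; exact List.getElem_mem _
  have ha1 : 1 ≤ a := (hdx _ hamem).1
  -- tail of d beyond position J
  have hdropJ : d.drop (J - 1) = a :: d.drop J := by
    rw [List.drop_eq_getElem_cons hJlt]
    congr 1
    · rw [ha, List.getD_eq_getElem _ _ hJlt]
    · congr 1; omega
  -- every element of d.drop J is ≤ a and between 1 and c
  have hdropJ_le : ∀ x ∈ d.drop J, x ≤ a := by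
    intro x hx
    rw [List.mem_iff_getElem] at hx
    obtain ⟨i, hi, rfl⟩ := hx
    rw [List.getElem_drop]
    rw [← List.getD_eq_getElem _ 0 (by simp at hi; omega)]
    exact sorted_getD_mono hds (by omega) (by simp at hi; omega)
  have hlenJ : (d.drop J).length = t - J := by simp [ht]
  have hsumJ1 : 1 ≤ (d.drop J).sum := by
    have hne : d.drop J ≠ [] := by
      intro hcon
      have := congrArg List.length hcon
      simp at this
      omega
    obtain ⟨y, l', hyl⟩ := List.exists_cons_of_ne_nil hne
    have hy : y ∈ d.drop J := by rw [hyl]; exact List.mem_cons_self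
    have hy1 := (hdx _ (List.mem_of_mem_drop hy)).1
    rw [hyl]
    simp
    omega
  have hsumJle : (d.drop J).sum ≤ (t - J) * a := by
    have := List.sum_le_card_nsmul (d.drop J) a hdropJ_le
    simpa [hlenJ, smul_eq_mul, mul_comm] using this
  set s := (d.drop J).sum - 1 with hs
  have hsle : s ≤ (t - J) * a - 1 := by omega
  set K : List ℕ := List.replicate (s / a) a ++ (if s % a = 0 then [] else [s % a]) with hK
  have hKsum : K.sum = s := by
    rw [hK]
    by_cases h0 : s % a = 0
    · simp only [h0, if_pos, List.append_nil, List.sum_replicate, smul_eq_mul]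
      exact Nat.div_mul_cancel (Nat.dvd_of_mod_eq_zero h0)
    · simp only [h0, if_neg, List.sum_append, List.sum_replicate, List.sum_cons,
        List.sum_nil, smul_eq_mul, ite_false]
      rw [add_zero, mul_comm]
      exact Nat.div_add_mod s a
  have hta : 1 ≤ (t - J) * a := by
    have : 1 * 1 ≤ (t - J) * a := Nat.mul_le_mul (by omega) ha1
    omega
  have hKlen : K.length ≤ t - J := by
    rw [hK]
    by_cases h0 : s % a = 0 <;> simp [h0]
    · calc s / a ≤ ((t - J) * a) / a := Nat.div_le_div_right (by omega)
        _ = t - J := by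
          rw [Nat.mul_div_assoc _ (dvd_refl a), Nat.div_self (by omega : 0 < a), mul_one]
    · have : s / a < t - J := by
        rw [Nat.div_lt_iff_lt_mul (by omega)]
        omega
      omega
  have hKmem : ∀ x ∈ K, 1 ≤ x ∧ x ≤ a := by
    intro x hx
    rw [hK] at hx
    rcases List.mem_append.mp hx with h | h
    · rw [List.eq_of_mem_replicate h]; omega
    · by_cases h0 : s % a = 0
      · simp [h0] at h
      · simp [h0] at h
        subst h
        exact ⟨by omega, le_of_lt (Nat.mod_lt _ (by omega))⟩
  have hKsorted : K.Pairwise (· ≥ ·) := by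
    rw [hK]
    rw [List.pairwise_append]
    refine ⟨List.pairwise_replicate.mpr (Or.inr (le_refl a)), ?_, ?_⟩
    · by_cases h0 : s % a = 0 <;> simp [h0]
    · intro x hx y hy
      rw [List.eq_of_mem_replicate hx]
      by_cases h0 : s % a = 0
      · simp [h0] at hy
      · simp [h0] at hy
        subst hy
        exact le_of_lt (Nat.mod_lt _ (by omega))
  set p := d.take (J - 1) with hp
  have hplen : p.length = J - 1 := by rw [hp]; simp; omega
  have hpd : ∀ i, i < J - 1 → p.getD i 0 = d.getD i 0 := by
    intro i hi
    rw [hp]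
    rw [List.getD_eq_getElem (List.take (J - 1) d) 0 (by simp; omega),
        List.getD_eq_getElem d 0 (by omega : i < d.length)]
    exact List.getElem_take
  have hpge : ∀ x ∈ p, a + 1 ≤ x := by
    intro x hx
    rw [List.mem_iff_getElem] at hx
    obtain ⟨i, hi, rfl⟩ := hx
    rw [← List.getD_eq_getElem p 0 hi]
    rw [hplen] at hi
    rcases hdesc with h1 | h2
    · omega
    · rw [hpd i hi]
      have := sorted_getD_mono hds (show i ≤ J - 2 by omega) (show J - 2 < t by omega)
      have h3 := sorted_getD_mono hds (show i ≤ J - 2 by omega) (show J - 2 < t by omega)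
      omega
  set b : List ℕ := p ++ (a + 1) :: K with hb
  have hblen : b.length = (J - 1) + 1 + K.length := by rw [hb]; simp [hplen]; omega
  refine ⟨b, ⟨?_, ?_, ?_⟩, ?_, ?_⟩
  · -- sorted
    rw [hb, List.pairwise_append]
    refine ⟨hds.sublist (List.take_sublist _ _), ?_, ?_⟩
    · rw [List.pairwise_cons]
      refine ⟨fun y hy => by have := hKmem y hy; omega, hKsorted⟩
    · intro x hx y hy
      have hxa := hpge x hx
      rcases List.mem_cons.mp hy with rfl | hy'
      · omega
      · have := hKmem y hy'; omega
  · -- bounds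
    intro x hx
    rw [hb] at hx
    rcases List.mem_append.mp hx with h | h
    · exact hdx x (List.take_subset _ _ h)
    · rcases List.mem_cons.mp h with rfl | h'
      · have := (hdx _ hamem).2; omega
      · have h1 := hKmem x h'
        have := (hdx _ hamem).2
        omega
  · -- sum
    have hsplit := List.sum_take_add_sum_drop d (J - 1)
    rw [hdropJ, ← hp] at hsplit
    rw [hb]
    simp only [List.sum_append, List.sum_cons, hKsum]
    rw [List.sum_cons] at hsplit
    omega
  · -- alexGT
    have hble : b.length ≤ t := by omega
    rcases lt_or_eq_of_le hble with hlt | heq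
    · exact Or.inl hlt
    · refine Or.inr ⟨heq, ?_⟩
      have hdeq : d = p ++ a :: d.drop J := by
        rw [hp, ← hdropJ, List.take_append_drop]
      rw [hb]
      nth_rewrite 1 [hdeq]
      exact lex_append p (List.Lex.rel (by omega))
  · -- agreement
    intro h h1 hJ
    rw [hb, List.getD_append _ _ _ _ (by omega)]
    rw [hp, List.getD_eq_getElem _ 0 (by rw [hplen]; omega), List.getElem_take]
    rw [← List.getD_eq_getElem _ 0 (by omega)]

theorem stmt_12 (m c : ℕ) (hm : 0 < m) (hc : 0 < c) (d : List ℕ)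
    (hd : IsPartOf m c d)
    (hnotmax : ∃ b : List ℕ, IsPartOf m c b ∧ alexGT b d) :
    (let i₀ := sSup {j : ℕ | 1 ≤ j ∧ ∃ b : List ℕ, IsPartOf m c b ∧ alexGT b d ∧
        ∀ h, 1 ≤ h → h < j → b.getD (h - 1) 0 = d.getD (h - 1) 0};
     i₀ = sSup {j : ℕ | 1 ≤ j ∧ j ≤ d.length - 1 ∧
        (j = 1 ∨ d.getD (j - 1) 0 < d.getD (j - 2) 0)} ∧
     i₀ < d.length ∧
     (i₀ = 1 ∨ d.getD (i₀ - 1) 0 < d.getD (i₀ - 2) 0) ∧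
     (d.getD (d.length - 1) 0 < d.getD (i₀ - 1) 0 →
        ∀ j, i₀ ≤ j → j ≤ d.length - 1 →
          d.getD (j - 1) 0 = d.getD (i₀ - 1) 0)) := by
  obtain ⟨hds, hdx, hdsum⟩ := hd
  have hd : IsPartOf m c d := ⟨hds, hdx, hdsum⟩
  have ht1 : 1 ≤ d.length := by
    cases d with
    | nil => simp at hdsum; omega
    | cons x l => simp
  have ht2 : 2 ≤ d.length := by
    by_contra hcon
    push_neg at hcon
    obtain ⟨b, hb, halex⟩ := hnotmax
    exact core hd hb (by omega) c (fun i hi => absurd hi (Nat.not_lt_zero i))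
      (fun k _ hk => absurd hk (by omega))
      (fun x hx => (hb.2.1 x (List.mem_of_mem_drop hx)).2) halex
  have hdle : ∀ k, k < d.length → 1 ≤ d.getD k 0 ∧ d.getD k 0 ≤ c := by
    intro k hk
    have hmem : d.getD k 0 ∈ d := by
      rw [List.getD_eq_getElem _ _ hk]; exact List.getElem_mem _
    exact hdx _ hmem
  set S1 : Set ℕ := {j : ℕ | 1 ≤ j ∧ ∃ b : List ℕ, IsPartOf m c b ∧ alexGT b d ∧
      ∀ h, 1 ≤ h → h < j → b.getD (h - 1) 0 = d.getD (h - 1) 0} with hS1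
  set S2 : Set ℕ := {j : ℕ | 1 ≤ j ∧ j ≤ d.length - 1 ∧
      (j = 1 ∨ d.getD (j - 1) 0 < d.getD (j - 2) 0)} with hS2
  intro i₀
  have h1S2 : (1 : ℕ) ∈ S2 := by
    rw [hS2]
    exact ⟨le_refl 1, by omega, Or.inl rfl⟩
  have hS2bdd : BddAbove S2 := by
    refine ⟨d.length - 1, ?_⟩
    intro j hj
    rw [hS2] at hj
    exact hj.2.1
  set J := sSup S2 with hJdef
  have hJmem : J ∈ S2 := Nat.sSup_mem ⟨1, h1S2⟩ hS2bdd
  rw [hS2] at hJmem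
  obtain ⟨hJ1, hJt, hJdesc⟩ := hJmem
  have hJub : ∀ j ∈ S2, j ≤ J := fun j hj => le_csSup hS2bdd hj
  -- constancy after J
  have hconst : ∀ k, J - 1 ≤ k → k < d.length - 1 → d.getD k 0 = d.getD (J - 1) 0 := by
    intro k
    induction k with
    | zero =>
      intro hk1 _
      have hJ1' : J = 1 := by omega
      rw [hJ1']
    | succ n ih =>
      intro hk1 hk2
      by_cases hn : J - 1 ≤ n
      · have hih := ih hn (by omega)
        have hle := sorted_getD_mono hds (show n ≤ n + 1 by omega)
          (show n + 1 < d.length by omega)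
        have hnd : ¬ (d.getD (n + 1) 0 < d.getD n 0) := by
          intro hlt
          have hmem : n + 2 ∈ S2 := by
            rw [hS2]
            refine ⟨by omega, by omega, Or.inr ?_⟩
            simpa using hlt
          have := hJub _ hmem
          omega
        omega
      · have hn1 : n + 1 = J - 1 := by omega
        rw [hn1]
  -- d_J < c
  have hcap : d.getD (J - 1) 0 < c := by
    by_contra hcon
    push_neg at hcon
    have hJc : d.getD (J - 1) 0 = c := le_antisymm (hdle (J - 1) (by omega)).2 hcon
    obtain ⟨b, hb, halex⟩ := hnotmax
    refine core hd hb (show 0 < d.length by omega) c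
      (fun i hi => absurd hi (Nat.not_lt_zero i)) ?_
      (fun x hx => (hb.2.1 x (List.mem_of_mem_drop hx)).2) halex
    intro k _ hk
    by_cases hkJ : J - 1 ≤ k
    · rw [hconst k hkJ hk, hJc]
    · have h1 := sorted_getD_mono hds (show k ≤ J - 1 by omega) (show J - 1 < d.length by omega)
      have h2 := (hdle k (by omega)).2
      omega
  -- J ∈ S1
  have hJS1 : J ∈ S1 := by
    obtain ⟨b, hb, halex, hagree⟩ := construct hd hJ1 hJt ht2 hcap hJdesc
    rw [hS1]
    exact ⟨hJ1, b, hb, halex, hagree⟩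
  have h1S1 : (1 : ℕ) ∈ S1 := by
    rw [hS1]
    obtain ⟨b, hb, halex⟩ := hnotmax
    exact ⟨le_refl 1, b, hb, halex, fun h h1 h2 => absurd h2 (by omega)⟩
  have hS1ub : ∀ j ∈ S1, j ≤ J := by
    intro j hj
    by_contra hcon
    push_neg at hcon
    rw [hS1] at hj
    obtain ⟨hj1, b, hb, halex, hagree⟩ := hj
    have hbs := hb.1
    have hagree' : ∀ i, i < J → b.getD i 0 = d.getD i 0 := by
      intro i hi
      have := hagree (i + 1) (by omega) (by omega)
      simpa using this
    refine core hd hb (show J < d.length by omega) (d.getD (J - 1) 0) hagree' ?_ ?_ halex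
    · intro k hk1 hk2
      exact hconst k (by omega) hk2
    · intro x hx
      rw [List.mem_iff_getElem] at hx
      obtain ⟨i, hi, rfl⟩ := hx
      have hib : J + i < b.length := by simp at hi; omega
      rw [List.getElem_drop]
      rw [← List.getD_eq_getElem b 0 hib]
      have h1 := sorted_getD_mono hbs (show J - 1 ≤ J + i by omega) hib
      have h2 := hagree' (J - 1) (by omega)
      omega
  have hS1bdd : BddAbove S1 := ⟨J, hS1ub⟩
  have hi0 : i₀ = J :=
    le_antisymm (csSup_le ⟨1, h1S1⟩ hS1ub) (le_csSup hS1bdd hJS1)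
  rw [hi0]
  refine ⟨rfl, by omega, hJdesc, ?_⟩
  intro _ j hj1 hj2
  exact hconst (j - 1) (by omega) (by omega)
end

section
/- Fix integers 1 ≤ c < s, m ≥ 1, and t with m/2 < t ≤ m. The number of functions a : Fin s → ℕ such that (i) the level sets S_k = {i : a(i) ≥ k} satisfy #S_k ≥ s − c + 1 for all 1 ≤ k ≤ t and S_{t+1} = ∅ (equivalently: a is a sum of indicators of t nested subsets each of size ≥ s−c+1), and (ii) Σ_{k=1}^{t} max(0, c − s + #S_k) = m, equals C(s, c−1) · C(m − t + c − 2, m − t). -/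
/-!
Write `S_k = {i | k ≤ a i}` and `q = c + #S_t - s`, and let `T = {i | a i < t}` be the complement
of `S_t`. Condition (i) says `q ≥ 1`, and double counting turns the sum in (ii) into
`t * q + ∑_{i ∈ T} a i`. Since this equals `m < 2t`, necessarily `q = 1`, i.e. `#T = c - 1`, and
`∑_{i ∈ T} a i = m - t`. Conversely every such `a` satisfies (i) and (ii). So `a` is determined by
the `(c - 1)`-set `T` together with a composition of `m - t` supported on `T` (its values are then
automatically `< t`), and stars and bars counts these.
-/

open Finset

theorem Finset.lt_of_mem_piAntidiag {ι : Type*} [DecidableEq ι] {T : Finset ι} {f : ι → ℕ}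
    {n t : ℕ} (hn : n < t) (hf : f ∈ piAntidiag T n) {i : ι} (hi : i ∈ T) : f i < t :=
  ((single_le_sum (fun j _ => Nat.zero_le (f j)) hi).trans (mem_piAntidiag.1 hf).1.le).trans_lt hn

theorem Finset.card_piAntidiag_nat_eq_choose {ι : Type*} [DecidableEq ι] (T : Finset ι) (n : ℕ) :
    #(piAntidiag T n) = (#T + n - 1).choose n := by
  rw [← card_finsuppAntidiag_nat_eq_choose, finsuppAntidiag, card_map, card_attach]

section LevelSets

variable {ι : Type*} [Fintype ι] {a : ι → ℕ} {t : ℕ}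

theorem sum_card_filter_le_eq_sum (ha : ∀ i, a i ≤ t) :
    ∑ k ∈ Icc 1 t, #{i | k ≤ a i} = ∑ i, a i := by
  simp_rw [card_filter]
  rw [sum_comm]
  refine sum_congr rfl fun i _ => ?_
  rw [← card_filter, show {k ∈ Icc 1 t | k ≤ a i} = Icc 1 (a i) by
    ext k; simp only [mem_filter, mem_Icc]; have := ha i; omega]
  simp

theorem sum_eq_sum_filter_lt_add_mul (ha : ∀ i, a i ≤ t) :
    ∑ i, a i = ∑ i with a i < t, a i + t * #{i | t ≤ a i} := by
  rw [← sum_filter_add_sum_filter_not univ (a · < t)]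
  congr 1
  rw [sum_congr rfl fun i hi => le_antisymm (ha i) (not_lt.1 (mem_filter.1 hi).2), sum_const,
    smul_eq_mul, mul_comm]
  simp only [not_lt]

theorem card_filter_le_add_card_filter_lt :
    #{i | t ≤ a i} + #{i | a i < t} = Fintype.card ι := by
  simpa only [not_le, card_univ] using card_filter_add_card_filter_not (s := univ) (t ≤ a ·)

theorem card_filter_le_anti {k : ℕ} (hk : k ≤ t) : #{i | t ≤ a i} ≤ #{i | k ≤ a i} :=
  card_le_card (monotone_filter_right _ fun _ _ h => hk.trans h)

theorem sum_Icc_tsub_card_filter_le_eq {c s : ℕ} (ha : ∀ i, a i ≤ t)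
    (hs : s ≤ c + #{i | t ≤ a i}) :
    ∑ k ∈ Icc 1 t, (c + #{i | k ≤ a i} - s)
      = t * (c + #{i | t ≤ a i} - s) + ∑ i with a i < t, a i := by
  have hle : ∀ k ∈ Icc 1 t, s ≤ c + #{i | k ≤ a i} := fun k hk =>
    hs.trans (Nat.add_le_add_left (card_filter_le_anti (mem_Icc.1 hk).2) c)
  rw [sum_tsub_distrib _ hle, sum_add_distrib, sum_card_filter_le_eq_sum ha,
    sum_eq_sum_filter_lt_add_mul ha]
  simp only [sum_const, Nat.card_Icc, add_tsub_cancel_right, smul_eq_mul]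
  have hmul : t * s ≤ t * c + t * #{i | t ≤ a i} := by
    rw [← mul_add]; exact Nat.mul_le_mul_left t hs
  rw [Nat.mul_sub, mul_add]
  omega

theorem level_conditions_iff {c m : ℕ} (hc : 1 ≤ c) (hcs : c < Fintype.card ι)
    (ht1 : m < 2 * t) (ht2 : t ≤ m) (ha : ∀ i, a i ≤ t) :
    ((∀ k, 1 ≤ k → k ≤ t → Fintype.card ι - c + 1 ≤ #{i | k ≤ a i}) ∧
        ∑ k ∈ Icc 1 t, (c + #{i | k ≤ a i} - Fintype.card ι) = m) ↔
      #{i | a i < t} = c - 1 ∧ ∑ i with a i < t, a i = m - t := by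
  have hcard := card_filter_le_add_card_filter_lt (a := a) (t := t)
  constructor
  · rintro ⟨hlevel, hsum⟩
    have hSt := hlevel t (by omega) le_rfl
    rw [sum_Icc_tsub_card_filter_le_eq ha (by omega)] at hsum
    have hq : c + #{i | t ≤ a i} - Fintype.card ι = 1 := by
      by_contra hq
      have := Nat.mul_le_mul_left t (show 2 ≤ c + #{i | t ≤ a i} - Fintype.card ι by omega)
      omega
    rw [hq] at hsum
    omega
  · rintro ⟨hT, hsum⟩
    refine ⟨fun k _ hk => ?_, ?_⟩
    · have := card_filter_le_anti (a := a) hk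
      omega
    · rw [sum_Icc_tsub_card_filter_le_eq ha (by omega),
        show c + #{i | t ≤ a i} - Fintype.card ι = 1 by omega]
      omega

section Piecewise

variable [DecidableEq ι]

theorem filter_piecewise_lt {T : Finset ι} {f : ι → ℕ} (hf : ∀ i ∈ T, f i < t) :
    ({i | T.piecewise f (fun _ => t) i < t} : Finset ι) = T := by
  ext i
  by_cases hi : i ∈ T <;> simp [hi, hf]

theorem injOn_piecewise_sigma_piAntidiag {n : ℕ} (hn : n < t) (R : Finset (Finset ι)) :
    Set.InjOn (fun p : (_ : Finset ι) × (ι → ℕ) => p.1.piecewise p.2 fun _ => t)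
      (R.sigma fun T => piAntidiag T n : Finset ((_ : Finset ι) × (ι → ℕ))) := by
  rintro ⟨T, f⟩ hp ⟨T', f'⟩ hp' h
  simp only [mem_coe, mem_sigma] at hp hp' h
  obtain rfl : T = T' := by
    rw [← filter_piecewise_lt fun i => lt_of_mem_piAntidiag hn hp.2 (i := i),
      ← filter_piecewise_lt fun i => lt_of_mem_piAntidiag hn hp'.2 (i := i), h]
  refine Sigma.ext rfl (heq_of_eq (funext fun i => ?_))
  show f i = f' i
  by_cases hi : i ∈ T
  · simpa [piecewise_eq_of_mem _ _ _ hi] using congrFun h i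
  · rw [not_imp_comm.1 ((mem_piAntidiag.1 hp.2).2 i) hi,
      not_imp_comm.1 ((mem_piAntidiag.1 hp'.2).2 i) hi]

theorem setOf_eq_image_sigma_piAntidiag {n : ℕ} (hn : n < t) (r : ℕ) :
    {a : ι → ℕ | (∀ i, a i ≤ t) ∧ #{i | a i < t} = r ∧ ∑ i with a i < t, a i = n}
      = ↑(((powersetCard r univ).sigma fun T => piAntidiag T n).image
          fun p : (_ : Finset ι) × (ι → ℕ) => p.1.piecewise p.2 fun _ => t) := by
  ext a
  simp only [Set.mem_ofPred_eq, coe_image, Set.mem_image, mem_coe, mem_sigma, mem_powersetCard,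
    subset_univ, true_and, Sigma.exists]
  constructor
  · rintro ⟨ha, hT, hsum⟩
    set T : Finset ι := {i | a i < t}
    refine ⟨T, T.piecewise a 0, ⟨hT, ?_⟩, ?_⟩
    · rw [mem_piAntidiag, sum_congr rfl fun i hi => T.piecewise_eq_of_mem a 0 hi]
      refine ⟨hsum, fun i hi => ?_⟩
      by_contra hiT
      exact hi (T.piecewise_eq_of_notMem _ _ hiT)
    · ext i
      by_cases hi : i ∈ T
      · simp only [piecewise_eq_of_mem _ _ _ hi]
      · rw [piecewise_eq_of_notMem _ _ _ hi]
        exact le_antisymm (not_lt.1 (by simpa [T] using hi)) (ha i)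
  · rintro ⟨T, f, ⟨hT, hf⟩, rfl⟩
    have hfT : ∀ i ∈ T, f i < t := fun i => lt_of_mem_piAntidiag hn hf
    refine ⟨fun i => ?_, by rw [filter_piecewise_lt hfT, hT], ?_⟩
    · by_cases hi : i ∈ T <;> simp [hi, (hfT i _).le]
    · rw [filter_piecewise_lt hfT,
        sum_congr rfl fun i hi => T.piecewise_eq_of_mem f (fun _ => t) hi]
      exact (mem_piAntidiag.1 hf).1

end Piecewise

theorem ncard_setOf_card_filter_lt_sum_eq {n : ℕ} (hn : n < t) (r : ℕ) :
    {a : ι → ℕ | (∀ i, a i ≤ t) ∧ #{i | a i < t} = r ∧ ∑ i with a i < t, a i = n}.ncard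
      = (Fintype.card ι).choose r * (r + n - 1).choose n := by
  classical
  rw [setOf_eq_image_sigma_piAntidiag hn, Set.ncard_coe_finset,
    card_image_of_injOn (injOn_piecewise_sigma_piAntidiag hn _), card_sigma,
    sum_congr rfl fun T hT => by rw [card_piAntidiag_nat_eq_choose, (mem_powersetCard.1 hT).2],
    sum_const, card_powersetCard, card_univ, smul_eq_mul]

end LevelSets

theorem stmt_15_general (s c m t : ℕ) (hc : 1 ≤ c) (hcs : c < s)
    (ht1 : m < 2 * t) (ht2 : t ≤ m) :
    {a : Fin s → ℕ |
      (∀ k, 1 ≤ k → k ≤ t →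
        s - c + 1 ≤ (Finset.univ.filter (fun i => k ≤ a i)).card) ∧
      (∀ i, a i ≤ t) ∧
      (∑ k ∈ Finset.Icc 1 t,
        (c + (Finset.univ.filter (fun i => k ≤ a i)).card - s)) = m}.ncard
    = Nat.choose s (c - 1) * Nat.choose (m - t + c - 2) (m - t) := by
  have hconditions := fun a ha =>
    level_conditions_iff (ι := Fin s) (a := a) hc (by simpa using hcs) ht1 ht2 ha
  simp only [Fintype.card_fin] at hconditions
  calc _ = {a : Fin s → ℕ | (∀ i, a i ≤ t) ∧ #{i | a i < t} = c - 1 ∧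
          ∑ i with a i < t, a i = m - t}.ncard := by
        congr 1
        ext a
        rw [Set.mem_ofPred_eq, Set.mem_ofPred_eq, and_left_comm]
        exact and_congr_right (hconditions a)
    _ = _ := by
        rw [ncard_setOf_card_filter_lt_sum_eq (by omega), Fintype.card_fin,
          show c - 1 + (m - t) - 1 = m - t + c - 2 by omega]

theorem stmt_15 (s c m t : ℕ) (hc : 1 ≤ c) (hcs : c < s) (hm : 1 ≤ m)
    (ht1 : m < 2 * t) (ht2 : t ≤ m) :
    {a : Fin s → ℕ |
      (∀ k, 1 ≤ k → k ≤ t →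
        s - c + 1 ≤ (Finset.univ.filter (fun i => k ≤ a i)).card) ∧
      (∀ i, a i ≤ t) ∧
      (∑ k ∈ Finset.Icc 1 t,
        (c + (Finset.univ.filter (fun i => k ≤ a i)).card - s)) = m}.ncard
    = Nat.choose s (c - 1) * Nat.choose (m - t + c - 2) (m - t) :=
  stmt_15_general s c m t hc hcs ht1 ht2
end
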